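/- Finite-time blow up for the comparison ODE: There is no twice differentiable function G : [0,∞) → ℝ satisfying G''(t) = G(t)²/2 for all t ≥ 0 together with G(0) = 1 and G'(0) = 0. Equivalently, any maximal solution of this initial value problem exists only on a bounded interval [0,T*) with T* < ∞ and satisfies G(t) → ∞ as t → T*. -/

import Mathlib

/-!
Since `G'' = G²/2 ≥ 0` and `G'(0) = 0`, the solution is increasing, so `G ≥ 1`, hence `G'' ≥ 1/2`
and `G(t) ≥ 1 + t²/4`; in particular `G ≥ 2` from `t = 2` on. Multiplying the equation by `G'`
gives the conserved energy `G'² - G³/3 = -1/3`, so for `G ≥ 2` we get `G' ≥ G^{3/2}/2`. Then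
`1/√G` decreases at rate at least `1/4` while staying positive, which is impossible on `[2, ∞)`.
-/

open Set Real

theorem le_of_hasDerivWithinAt_Ici {f f' g g' : ℝ → ℝ} {a : ℝ}
    (hf : ∀ t, a ≤ t → HasDerivWithinAt f (f' t) (Ici a) t)
    (hg : ∀ t, a ≤ t → HasDerivWithinAt g (g' t) (Ici a) t)
    (ha : f a ≤ g a) (hle : ∀ t, a ≤ t → f' t ≤ g' t) {t : ℝ} (ht : a ≤ t) : f t ≤ g t := by
  have hcont : ∀ {φ φ' : ℝ → ℝ}, (∀ s, a ≤ s → HasDerivWithinAt φ (φ' s) (Ici a) s) →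
      ContinuousOn φ (Icc a t) := fun hφ s hs =>
    (hφ s hs.1).continuousWithinAt.mono Icc_subset_Ici_self
  have hright : ∀ {φ φ' : ℝ → ℝ}, (∀ s, a ≤ s → HasDerivWithinAt φ (φ' s) (Ici a) s) →
      ∀ s ∈ Ico a t, HasDerivWithinAt φ (φ' s) (Ici s) s := fun hφ s hs =>
    (hφ s hs.1).mono (Ici_subset_Ici.2 hs.1)
  exact image_le_of_deriv_right_le_deriv_boundary (hcont hf) (hright hf) ha (hcont hg)
    (hright hg) (fun s hs => hle s hs.1) ⟨ht, le_rfl⟩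

theorem false_of_mul_sqrt_le_deriv {u u' : ℝ → ℝ} {a c : ℝ} (hc : 0 < c)
    (hu : ∀ t, a ≤ t → HasDerivWithinAt u (u' t) (Ici a) t)
    (hpos : ∀ t, a ≤ t → 0 < u t) (hgrowth : ∀ t, a ≤ t → c * u t * √(u t) ≤ u' t) : False := by
  set v : ℝ → ℝ := fun t => (√(u t))⁻¹
  have hv : ∀ t, a ≤ t → HasDerivWithinAt v (-(u' t / (2 * √(u t))) / √(u t) ^ 2) (Ici a) t :=
    fun t ht => ((hu t ht).sqrt (hpos t ht).ne').inv (sqrt_pos.2 (hpos t ht)).ne'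
  have hline : ∀ t, HasDerivWithinAt (fun s => v a - c / 2 * (s - a)) (-(c / 2 * 1)) (Ici a) t :=
    fun t => (((hasDerivWithinAt_id t _).sub_const a).const_mul (c / 2)).const_sub (v a)
  have hv' : ∀ t, a ≤ t → -(u' t / (2 * √(u t))) / √(u t) ^ 2 ≤ -(c / 2 * 1) := by
    intro t ht
    have hs := sqrt_pos.2 (hpos t ht)
    rw [sq_sqrt (hpos t ht).le, neg_div, neg_le_neg_iff, le_div_iff₀ (hpos t ht),
      le_div_iff₀ (by positivity)]
    linarith [hgrowth t ht]
  have hend : a ≤ a + 2 * v a / c := le_add_of_nonneg_right (by positivity)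
  have hle := le_of_hasDerivWithinAt_Ici hv (fun t _ => hline t) (by simp) hv' hend
  have hvpos : 0 < v (a + 2 * v a / c) := inv_pos.2 (sqrt_pos.2 (hpos _ hend))
  have hdrop : c / 2 * (a + 2 * v a / c - a) = v a := by field_simp; ring
  linarith

def IsComparisonSolution (G G' : ℝ → ℝ) : Prop :=
  ∀ t, 0 ≤ t → HasDerivWithinAt G (G' t) (Ici 0) t ∧ HasDerivWithinAt G' (G t ^ 2 / 2) (Ici 0) t

namespace IsComparisonSolution

variable {G G' : ℝ → ℝ}

theorem energy_eq (h : IsComparisonSolution G G') {t : ℝ} (ht : 0 ≤ t) :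
    G' t ^ 2 - G t ^ 3 / 3 = G' 0 ^ 2 - G 0 ^ 3 / 3 := by
  have hE : ∀ s : ℝ, 0 ≤ s → HasDerivWithinAt (fun t => G' t ^ 2 - G t ^ 3 / 3) 0 (Ici 0) s := by
    intro s hs
    refine (((h s hs).2.pow 2).sub (((h s hs).1.pow 3).div_const 3)).congr_deriv ?_
    norm_num
    ring
  have hconst : ∀ s : ℝ, 0 ≤ s → HasDerivWithinAt (fun _ => G' 0 ^ 2 - G 0 ^ 3 / 3) 0 (Ici 0) s :=
    fun s _ => hasDerivWithinAt_const s _ _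
  exact le_antisymm (le_of_hasDerivWithinAt_Ici hE hconst le_rfl (fun _ _ => le_rfl) ht)
    (le_of_hasDerivWithinAt_Ici hconst hE le_rfl (fun _ _ => le_rfl) ht)

theorem deriv_nonneg (h : IsComparisonSolution G G') (h0' : G' 0 = 0) {t : ℝ} (ht : 0 ≤ t) :
    0 ≤ G' t :=
  le_of_hasDerivWithinAt_Ici (fun s _ => hasDerivWithinAt_const s _ 0) (fun s hs => (h s hs).2)
    h0'.ge (fun _ _ => by positivity) ht

theorem one_le (h : IsComparisonSolution G G') (h0 : G 0 = 1) (h0' : G' 0 = 0) {t : ℝ}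
    (ht : 0 ≤ t) : 1 ≤ G t :=
  le_of_hasDerivWithinAt_Ici (fun s _ => hasDerivWithinAt_const s _ 1) (fun s hs => (h s hs).1)
    h0.ge (fun _ hs => h.deriv_nonneg h0' hs) ht

theorem half_le_deriv (h : IsComparisonSolution G G') (h0 : G 0 = 1) (h0' : G' 0 = 0) {t : ℝ}
    (ht : 0 ≤ t) : t / 2 ≤ G' t := by
  refine le_of_hasDerivWithinAt_Ici (f := fun s => s / 2) (f' := fun _ => 1 / 2)
    (fun s _ => (hasDerivAt_id' (x := s)).hasDerivWithinAt.div_const 2) (fun s hs => (h s hs).2)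
    (by simp [h0']) (fun s hs => ?_) ht
  nlinarith [h.one_le h0 h0' hs]

theorem one_add_sq_div_four_le (h : IsComparisonSolution G G') (h0 : G 0 = 1) (h0' : G' 0 = 0)
    {t : ℝ} (ht : 0 ≤ t) : 1 + t ^ 2 / 4 ≤ G t := by
  refine le_of_hasDerivWithinAt_Ici (f := fun s => 1 + s ^ 2 / 4) (f' := fun s => s / 2)
    (fun s _ => ?_) (fun s hs => (h s hs).1) (by simp [h0])
    (fun s hs => h.half_le_deriv h0 h0' hs) ht
  have hd := (((hasDerivAt_id' (x := s)).pow 2).div_const 4).const_add 1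
  refine hd.hasDerivWithinAt.congr_deriv ?_
  norm_num
  ring

theorem mul_sqrt_div_two_le_deriv (h : IsComparisonSolution G G') (h0 : G 0 = 1)
    (h0' : G' 0 = 0) {t : ℝ} (ht : 2 ≤ t) : G t * √(G t) / 2 ≤ G' t := by
  have ht0 : (0 : ℝ) ≤ t := zero_le_two.trans ht
  have hG2 : 2 ≤ G t := by nlinarith [h.one_add_sq_div_four_le h0 h0' ht0]
  have henergy : G' t ^ 2 = (G t ^ 3 - 1) / 3 := by
    have := h.energy_eq ht0
    rw [h0, h0'] at this
    linarith
  have hsq : (G t * √(G t) / 2) ^ 2 = G t ^ 3 / 4 := by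
    rw [div_pow, mul_pow, sq_sqrt (by linarith)]; ring
  refine (pow_le_pow_iff_left₀ (by positivity) (h.deriv_nonneg h0' ht0) two_ne_zero).1 ?_
  have hG3 : (2 : ℝ) ^ 3 ≤ G t ^ 3 := pow_le_pow_left₀ zero_le_two hG2 3
  rw [hsq, henergy]
  linarith

end IsComparisonSolution

theorem comparison_ode_blowup :
    ¬ ∃ G G' : ℝ → ℝ,
      (∀ t, 0 ≤ t →
        HasDerivWithinAt G (G' t) (Set.Ici 0) t ∧
        HasDerivWithinAt G' (G t ^ 2 / 2) (Set.Ici 0) t) ∧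
      G 0 = 1 ∧ G' 0 = 0 := by
  rintro ⟨G, G', h, h0, h0'⟩
  have h : IsComparisonSolution G G' := h
  exact false_of_mul_sqrt_le_deriv (a := 2) (c := 1 / 2) one_half_pos
    (fun t ht => (h t (zero_le_two.trans ht)).1.mono (Ici_subset_Ici.2 zero_le_two))
    (fun t ht => zero_lt_one.trans_le (h.one_le h0 h0' (zero_le_two.trans ht)))
    (fun t ht => by linarith [h.mul_sqrt_div_two_le_deriv h0 h0' ht])
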